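/- arXiv:1606.06946 — 7 statements merged into one kernel-verified Lean document; each statement's English description precedes it below -/
import Mathlib

section
/- The NFME dissipation function f is differentiable at x = 0 with derivative f′(0) = −τ_M; equivalently, lim_{χ→0⁺} P₂(χ)/χ = −τ_M. -/
open Real Set Filter Topology

/-- The function 𝓡(χ) from the NFME model. -/
noncomputable def Rfun (τA α χ : ℝ) : ℝ :=
  χ + χ ^ (1 - α) * τA ^ (-α) * Real.cos (α * Real.pi / 2) * Real.Gamma (α + 1)

/-- The function 𝓘(χ) from the NFME model. -/
noncomputable def Ifun (τA τM α χ : ℝ) : ℝ :=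
  -1 / τM - χ ^ (1 - α) * τA ^ (-α) * Real.sin (α * Real.pi / 2) * Real.Gamma (α + 1)

/-- The function P₂(χ) from the NFME model. -/
noncomputable def P2 (τA τM A2 α χ : ℝ) : ℝ :=
  Ifun τA τM α χ * χ / ((Rfun τA α χ + A2 * χ) ^ 2 + (Ifun τA τM α χ) ^ 2)

/-- The NFME dissipation function f(x) = P₂(|x|)·sgn(x). -/
noncomputable def nfmeF (τA τM A2 α x : ℝ) : ℝ :=
  P2 τA τM A2 α |x| * Real.sign x

/-!
Away from 0, `P₂(χ)/χ = 𝓘(χ) / ((𝓡(χ) + A₂χ)² + 𝓘(χ)²)`. Since `α < 1`, the power `χ^{1−α}`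
is continuous and vanishes at 0, so this quotient is continuous at 0 with value
`(−1/τ_M) / (1/τ_M)² = −τ_M`. As `f` is the odd extension of `P₂`, its difference quotient at 0
is `P₂(|x|)/|x|`, which therefore tends to `−τ_M` as well.
-/

theorem hasDerivAt_comp_abs_mul_sign_zero {p : ℝ → ℝ} {L : ℝ}
    (hp : Tendsto (fun χ => p χ / χ) (𝓝[>] 0) (𝓝 L)) :
    HasDerivAt (fun x => p |x| * Real.sign x) L 0 := by
  rw [hasDerivAt_iff_tendsto_slope]
  refine (hp.comp tendsto_abs_nhdsNE_zero).congr' ?_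
  filter_upwards [self_mem_nhdsWithin] with x (hx : x ≠ 0)
  rw [slope_def_field, Function.comp_apply, Real.sign_zero, mul_zero, sub_zero, sub_zero]
  rcases hx.lt_or_gt with hneg | hpos
  · rw [Real.sign_of_neg hneg, abs_of_neg hneg]
    field_simp
  · rw [Real.sign_of_pos hpos, abs_of_pos hpos, mul_one]

section NFME

variable {τA τM A2 α : ℝ}

theorem continuous_Rfun (hα : α ≤ 1) : Continuous (Rfun τA α) := by
  have := Real.continuous_rpow_const (sub_nonneg.mpr hα)
  unfold Rfun
  fun_prop

theorem continuous_Ifun (hα : α ≤ 1) : Continuous (Ifun τA τM α) := by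
  have := Real.continuous_rpow_const (sub_nonneg.mpr hα)
  unfold Ifun
  fun_prop

theorem Rfun_zero (hα : α < 1) : Rfun τA α 0 = 0 := by
  simp [Rfun, Real.zero_rpow (sub_ne_zero.mpr hα.ne')]

theorem Ifun_zero (hα : α < 1) : Ifun τA τM α 0 = -1 / τM := by
  simp [Ifun, Real.zero_rpow (sub_ne_zero.mpr hα.ne')]

theorem P2_div_self {χ : ℝ} (hχ : χ ≠ 0) :
    P2 τA τM A2 α χ / χ =
      Ifun τA τM α χ / ((Rfun τA α χ + A2 * χ) ^ 2 + Ifun τA τM α χ ^ 2) := by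
  rw [P2, div_right_comm, mul_div_cancel_right₀ _ hχ]

theorem tendsto_P2_div_self (hτM : τM ≠ 0) (hα : α < 1) :
    Tendsto (fun χ => P2 τA τM A2 α χ / χ) (𝓝[≠] 0) (𝓝 (-τM)) := by
  have hcont : ContinuousAt
      (fun χ => Ifun τA τM α χ / ((Rfun τA α χ + A2 * χ) ^ 2 + Ifun τA τM α χ ^ 2)) 0 := by
    have hR := (continuous_Rfun (τA := τA) hα.le).continuousAt (x := 0)
    have hI := (continuous_Ifun (τA := τA) (τM := τM) hα.le).continuousAt (x := 0)
    refine hI.div (by fun_prop) ?_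
    rw [Rfun_zero hα, Ifun_zero hα]
    positivity
  have hvalue :
      Ifun τA τM α 0 / ((Rfun τA α 0 + A2 * 0) ^ 2 + Ifun τA τM α 0 ^ 2) = -τM := by
    rw [Rfun_zero hα, Ifun_zero hα]
    field_simp
    ring
  rw [← hvalue]
  refine (hcont.tendsto.mono_left nhdsWithin_le_nhds).congr' ?_
  filter_upwards [self_mem_nhdsWithin] with χ hχ
  exact (P2_div_self hχ).symm

end NFME

theorem nfmeF_hasDerivAt_zero_general (τA τM A2 α : ℝ) (hτM : 0 < τM) (hα1 : α < 1) :
    HasDerivAt (nfmeF τA τM A2 α) (-τM) 0 ∧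
    Tendsto (fun χ : ℝ => P2 τA τM A2 α χ / χ) (𝓝[>] 0) (𝓝 (-τM)) := by
  have hlim := (tendsto_P2_div_self (τA := τA) (A2 := A2) hτM.ne' hα1).mono_left
    (nhdsGT_le_nhdsNE 0)
  exact ⟨hasDerivAt_comp_abs_mul_sign_zero hlim, hlim⟩

/-- The NFME dissipation function f is differentiable at x = 0 with derivative
f′(0) = −τ_M; equivalently, lim_{χ→0⁺} P₂(χ)/χ = −τ_M. -/
theorem nfmeF_hasDerivAt_zero (τA τM A2 α : ℝ) (hτA : 0 < τA) (hτM : 0 < τM) (hA2 : 0 < A2)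
    (hα0 : 0 < α) (hα1 : α < 1) :
    HasDerivAt (nfmeF τA τM A2 α) (-τM) 0 ∧
    Tendsto (fun χ : ℝ => P2 τA τM A2 α χ / χ) (𝓝[>] 0) (𝓝 (-τM)) :=
  nfmeF_hasDerivAt_zero_general τA τM A2 α hτM hα1
end

section
/- The NFME dissipation function f is continuously differentiable (of class C¹) on all of ℝ. -/
open Real Set Filter Topology

/-! On `t ≥ 0` write `P₂(t) = t · h(t, t^β)` with `β = 1 - α` and `h` rational, smooth near the
curve `(t, t^β)` because `𝓘 < 0` along it. Although `t^β` is not differentiable at `0`, the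
derivative `h + t ∂₁h + β t^β ∂₂h` of `t · h(t, t^β)` involves only `t^β`, so it extends
continuously to `t = 0`. The odd extension `f` of `P₂` then has the continuous derivative
`P₂' ∘ |·|`: away from `0` by symmetry, and at `0` because a continuous function whose derivative
has a limit at a point is differentiable there with that derivative. -/

theorem contDiff_one_comp_abs_mul_sign {p p' : ℝ → ℝ} (hp0 : p 0 = 0)
    (hpc : ContinuousWithinAt p (Ici 0) 0) (hp : ∀ t > 0, HasDerivAt p (p' t) t)
    (hp' : ContinuousOn p' (Ici 0)) :
    ContDiff ℝ 1 (fun x => p |x| * sign x) := by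
  have hderiv_ne : ∀ x ≠ 0, HasDerivAt (fun x => p |x| * sign x) (p' |x|) x := by
    intro x hx
    rcases hx.lt_or_gt with hneg | hpos
    · have hodd : (fun y => -p (-y)) =ᶠ[𝓝 x] fun y => p |y| * sign y := by
        filter_upwards [Iio_mem_nhds hneg] with y hy
        rw [abs_of_neg hy, sign_of_neg hy, mul_neg_one]
      have := ((hp (-x) (neg_pos.2 hneg)).comp x (hasDerivAt_neg x)).neg
      rw [abs_of_neg hneg]
      exact (this.congr_of_eventuallyEq hodd.symm).congr_deriv (by ring)
    · have heven : p =ᶠ[𝓝 x] fun y => p |y| * sign y := by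
        filter_upwards [Ioi_mem_nhds hpos] with y hy
        rw [abs_of_pos hy, sign_of_pos hy, mul_one]
      rw [abs_of_pos hpos]
      exact (hp x hpos).congr_of_eventuallyEq heven.symm
  have hcont : ContinuousAt (fun x => p |x| * sign x) 0 := by
    have habs : Tendsto (fun x => p |x|) (𝓝 0) (𝓝 0) := by
      have : Tendsto (fun x : ℝ => |x|) (𝓝 0) (𝓝[Ici 0] 0) := tendsto_nhdsWithin_iff.2
        ⟨by simpa using (continuous_abs.tendsto (0 : ℝ)), .of_forall abs_nonneg⟩
      have h := hpc.tendsto.comp this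
      rwa [hp0] at h
    show Tendsto _ _ (𝓝 (p |0| * sign 0))
    rw [Real.sign_zero, mul_zero]
    refine squeeze_zero_norm (fun x => ?_) (by simpa using habs.norm)
    rcases sign_apply_eq x with h | h | h <;> simp [h]
  have hderiv := hasDerivAt_of_hasDerivAt_of_ne' hderiv_ne hcont
    ((hp'.comp_continuous continuous_abs abs_nonneg).continuousAt)
  have hderiv_eq : deriv (fun x => p |x| * sign x) = p' ∘ abs := funext fun x => (hderiv x).deriv
  rw [contDiff_one_iff_deriv, hderiv_eq]
  exact ⟨fun x => (hderiv x).differentiableAt, hp'.comp_continuous continuous_abs abs_nonneg⟩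

theorem hasDerivAt_mul_comp_rpow {h : ℝ × ℝ → ℝ} {β t : ℝ} (ht : 0 < t)
    (hh : DifferentiableAt ℝ h (t, t ^ β)) :
    HasDerivAt (fun t => t * h (t, t ^ β))
      (h (t, t ^ β) + fderiv ℝ h (t, t ^ β) (t, β * t ^ β)) t := by
  have hcurve : HasDerivAt (fun t : ℝ => (t, t ^ β)) (1, β * t ^ (β - 1)) t :=
    (hasDerivAt_id t).prodMk (hasDerivAt_rpow_const (.inl ht.ne'))
  have hscale : t • ((1 : ℝ), β * t ^ (β - 1)) = (t, β * t ^ β) := by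
    rw [rpow_sub_one ht.ne', Prod.smul_mk, smul_eq_mul, smul_eq_mul]
    congr 1 <;> field_simp
  refine ((hasDerivAt_id t).mul (hh.hasFDerivAt.comp_hasDerivAt t hcurve)).congr_deriv ?_
  rw [← hscale, map_smul, smul_eq_mul, id, one_mul]
  rfl

theorem contDiff_one_abs_mul_comp_rpow_mul_sign {h : ℝ × ℝ → ℝ} {U : Set (ℝ × ℝ)} {β : ℝ}
    (hβ : 0 < β) (hU : IsOpen U) (hh : ContDiffOn ℝ 1 h U)
    (hcurve : MapsTo (fun t : ℝ => (t, t ^ β)) (Ici 0) U) :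
    ContDiff ℝ 1 (fun x => |x| * h (|x|, |x| ^ β) * sign x) := by
  have hγ : Continuous fun t : ℝ => (t, t ^ β) :=
    continuous_id.prodMk (continuous_rpow_const hβ.le)
  have hcomp : ContinuousOn (fun t : ℝ => h (t, t ^ β)) (Ici 0) :=
    hh.continuousOn.comp hγ.continuousOn hcurve
  have hderiv (t : ℝ) (ht : 0 < t) := hasDerivAt_mul_comp_rpow ht
    ((hh.differentiableOn one_ne_zero _ (hcurve ht.le)).differentiableAt
      (hU.mem_nhds (hcurve ht.le)))
  have hfderiv : ContinuousOn (fun t : ℝ => fderiv ℝ h (t, t ^ β)) (Ici 0) :=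
    (hh.continuousOn_fderiv_of_isOpen hU le_rfl).comp hγ.continuousOn hcurve
  exact contDiff_one_comp_abs_mul_sign (by simp) ((continuousOn_id.mul hcomp) 0 self_mem_Ici)
    hderiv (hcomp.add (hfderiv.clm_apply
      (continuous_id.prodMk (continuous_const.mul (continuous_rpow_const hβ.le))).continuousOn))

/-- `𝓘` and `𝓘 / ((𝓡 + A₂χ)² + 𝓘²)` as functions of `q = (χ, χ ^ (1 - α))`, with the two
coordinates treated as independent variables. -/
noncomputable def nfmeI (τA τM α : ℝ) (q : ℝ × ℝ) : ℝ :=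
  -1 / τM - q.2 * τA ^ (-α) * Real.sin (α * Real.pi / 2) * Real.Gamma (α + 1)

noncomputable def nfmeQuot (τA τM A2 α : ℝ) (q : ℝ × ℝ) : ℝ :=
  nfmeI τA τM α q / ((q.1 + q.2 * τA ^ (-α) * Real.cos (α * Real.pi / 2) * Real.Gamma (α + 1)
    + A2 * q.1) ^ 2 + nfmeI τA τM α q ^ 2)

theorem P2_eq_mul_nfmeQuot (τA τM A2 α χ : ℝ) :
    P2 τA τM A2 α χ = χ * nfmeQuot τA τM A2 α (χ, χ ^ (1 - α)) := by
  rw [P2, nfmeQuot, mul_comm, mul_div_assoc]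
  rfl

theorem nfmeI_neg {τA τM α t u : ℝ} (hτA : 0 ≤ τA) (hτM : 0 < τM) (hα0 : 0 ≤ α) (hα2 : α ≤ 2)
    (hu : 0 ≤ u) : nfmeI τA τM α (t, u) < 0 := by
  have hsin : 0 ≤ Real.sin (α * Real.pi / 2) :=
    sin_nonneg_of_nonneg_of_le_pi (by positivity) (by nlinarith [pi_pos])
  have hΓ : 0 < Real.Gamma (α + 1) := Gamma_pos_of_pos (by linarith)
  have hτA' := rpow_nonneg hτA (-α)
  rw [nfmeI, sub_neg]
  exact (div_neg_of_neg_of_pos neg_one_lt_zero hτM).trans_le (by positivity)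

theorem contDiffOn_nfmeQuot (τA τM A2 α : ℝ) {n : WithTop ℕ∞} :
    ContDiffOn ℝ n (nfmeQuot τA τM A2 α) {q | nfmeI τA τM α q ≠ 0} := by
  have hI : ContDiff ℝ n (nfmeI τA τM α) := by unfold nfmeI; fun_prop
  refine ContDiffOn.div (by fun_prop) (by fun_prop) fun q hq => ?_
  have : nfmeI τA τM α q ^ 2 ≠ 0 := pow_ne_zero 2 hq
  positivity

theorem nfmeF_contDiff_one_general (τA τM A2 α : ℝ) (hτA : 0 < τA) (hτM : 0 < τM)
    (hα0 : 0 < α) (hα1 : α < 1) :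
    ContDiff ℝ 1 (nfmeF τA τM A2 α) := by
  have hU : IsOpen {q | nfmeI τA τM α q ≠ 0} :=
    isOpen_ne_fun (by unfold nfmeI; fun_prop) continuous_const
  have hf : nfmeF τA τM A2 α = fun x => |x| * nfmeQuot τA τM A2 α (|x|, |x| ^ (1 - α)) * sign x :=
    funext fun x => by rw [nfmeF, P2_eq_mul_nfmeQuot]
  rw [hf]
  exact contDiff_one_abs_mul_comp_rpow_mul_sign (by linarith) hU (contDiffOn_nfmeQuot τA τM A2 α)
    fun _ ht => (nfmeI_neg hτA.le hτM hα0.le (by linarith) (rpow_nonneg ht _)).ne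

/-- The NFME dissipation function f is continuously differentiable (C¹) on ℝ. -/
theorem nfmeF_contDiff_one (τA τM A2 α : ℝ) (hτA : 0 < τA) (hτM : 0 < τM) (hA2 : 0 < A2)
    (hα0 : 0 < α) (hα1 : α < 1) :
    ContDiff ℝ 1 (nfmeF τA τM A2 α) :=
  nfmeF_contDiff_one_general τA τM A2 α hτA hτM hα0 hα1
end

section
/- The leading non-smooth behaviour of P₂ at the origin is of order χ^{2−α}: lim_{χ→0⁺} (P₂(χ) + τ_M χ)/χ^{2−α} = τ_M² τ_A^{−α} sin(απ/2) Γ(α+1). -/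
open Real Set Filter Topology

/-!
Write 𝓡 + A₂χ = cχ + aχ^{1−α} and 𝓘 = −1/τ − bχ^{1−α} with τ = τ_M, c = 1 + A₂,
a = τ_A^{−α} cos(απ/2) Γ(α+1), b = τ_A^{−α} sin(απ/2) Γ(α+1), and let D = (𝓡 + A₂χ)² + 𝓘².
Then P₂ + τχ = χ(𝓘 + τD)/D, and in 𝓘 + τD the constant terms cancel, leaving
𝓘 + τD = χ^{1−α}(b + τχ^{1−α}((cχ^α + a)² + b²)). Hence (P₂ + τχ)/χ^{2−α} agrees on χ > 0 with a
function continuous at 0, where it takes the value b/D(0) = τ²b.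
-/

section
variable {a b c τ α : ℝ}

lemma continuousAt_zero_remainder_numerator (hα0 : 0 < α) (hα1 : α < 1) :
    ContinuousAt (fun χ : ℝ => b + τ * χ ^ (1 - α) * ((c * χ ^ α + a) ^ 2 + b ^ 2)) 0 := by
  have h1 : (0:ℝ) ≠ 0 ∨ 0 ≤ 1 - α := Or.inr (by linarith)
  have h2 : (0:ℝ) ≠ 0 ∨ 0 ≤ α := Or.inr hα0.le
  fun_prop (disch := assumption)

lemma continuousAt_zero_sq_add_sq_rpow (hα1 : α < 1) :
    ContinuousAt (fun χ : ℝ => (c * χ + a * χ ^ (1 - α)) ^ 2 + (-1 / τ - b * χ ^ (1 - α)) ^ 2) 0 := by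
  have h1 : (0:ℝ) ≠ 0 ∨ 0 ≤ 1 - α := Or.inr (by linarith)
  fun_prop (disch := assumption)

lemma div_add_mul_div_rpow_eq {χ : ℝ} (hτ : τ ≠ 0) (hχ : 0 < χ)
    (hD : (c * χ + a * χ ^ (1 - α)) ^ 2 + (-1 / τ - b * χ ^ (1 - α)) ^ 2 ≠ 0) :
    ((-1 / τ - b * χ ^ (1 - α)) * χ / ((c * χ + a * χ ^ (1 - α)) ^ 2 + (-1 / τ - b * χ ^ (1 - α)) ^ 2)
      + τ * χ) / χ ^ (2 - α) =
    (b + τ * χ ^ (1 - α) * ((c * χ ^ α + a) ^ 2 + b ^ 2)) /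
      ((c * χ + a * χ ^ (1 - α)) ^ 2 + (-1 / τ - b * χ ^ (1 - α)) ^ 2) := by
  set y := χ ^ (1 - α) with hy
  set D := (c * χ + a * y) ^ 2 + (-1 / τ - b * y) ^ 2
  set z := χ ^ α with hz
  have hχ_eq : χ = y * z := by
    rw [hy, hz, ← Real.rpow_add hχ]; simp
  have h2 : χ ^ (2 - α) = χ * y := by
    rw [show (2:ℝ) - α = 1 + (1 - α) by ring, Real.rpow_add hχ, Real.rpow_one]
  have hy0 : y ≠ 0 := (Real.rpow_pos_of_pos hχ _).ne'
  have hcancel : (-1 / τ - b * y) + τ * D = y * (b + τ * y * ((c * z + a) ^ 2 + b ^ 2)) := by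
    simp only [D]
    rw [hχ_eq]
    field_simp
    ring
  rw [h2, div_add' _ _ _ hD, div_div, div_eq_div_iff (mul_ne_zero hD (mul_ne_zero hχ.ne' hy0)) hD]
  linear_combination χ * D * hcancel

theorem tendsto_div_add_mul_div_rpow_nhdsGT_zero (hτ : τ ≠ 0) (hα0 : 0 < α) (hα1 : α < 1) :
    Tendsto (fun χ : ℝ => ((-1 / τ - b * χ ^ (1 - α)) * χ /
        ((c * χ + a * χ ^ (1 - α)) ^ 2 + (-1 / τ - b * χ ^ (1 - α)) ^ 2) + τ * χ) / χ ^ (2 - α))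
      (𝓝[>] 0) (𝓝 (τ ^ 2 * b)) := by
  have h0 : (0 : ℝ) ^ (1 - α) = 0 := Real.zero_rpow (by linarith)
  have hD := continuousAt_zero_sq_add_sq_rpow (a := a) (b := b) (c := c) (τ := τ) hα1
  have hD0 : (c * 0 + a * 0 ^ (1 - α)) ^ 2 + (-1 / τ - b * 0 ^ (1 - α)) ^ 2 ≠ 0 := by
    simp [h0, hτ]
  have hF := (continuousAt_zero_remainder_numerator (a := a) (b := b) (c := c) (τ := τ)
    hα0 hα1).tendsto.div hD.tendsto hD0
  have hval : (b + τ * 0 ^ (1 - α) * ((c * 0 ^ α + a) ^ 2 + b ^ 2)) /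
      ((c * 0 + a * 0 ^ (1 - α)) ^ 2 + (-1 / τ - b * 0 ^ (1 - α)) ^ 2) = τ ^ 2 * b := by
    simp only [h0]
    field_simp
    ring
  beta_reduce at hF
  rw [hval] at hF
  refine (hF.mono_left nhdsWithin_le_nhds).congr' ?_
  filter_upwards [self_mem_nhdsWithin, nhdsWithin_le_nhds (hD.eventually_ne hD0)] with χ hχ hDχ
  exact (div_add_mul_div_rpow_eq hτ hχ hDχ).symm
end

theorem P2_leading_nonsmooth_general (τA τM A2 α : ℝ) (hτM : 0 < τM)
    (hα0 : 0 < α) (hα1 : α < 1) :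
    Tendsto (fun χ : ℝ => (P2 τA τM A2 α χ + τM * χ) / χ ^ (2 - α)) (𝓝[>] 0)
      (𝓝 (τM ^ 2 * τA ^ (-α) * Real.sin (α * Real.pi / 2) * Real.Gamma (α + 1))) := by
  convert tendsto_div_add_mul_div_rpow_nhdsGT_zero (c := 1 + A2)
    (a := τA ^ (-α) * Real.cos (α * Real.pi / 2) * Real.Gamma (α + 1))
    (b := τA ^ (-α) * Real.sin (α * Real.pi / 2) * Real.Gamma (α + 1)) hτM.ne' hα0 hα1 using 2 with χ
  · simp only [P2, Rfun, Ifun]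
    ring
  · ring

/-- The leading non-smooth behaviour of P₂ at the origin is of order χ^{2−α}:
lim_{χ→0⁺} (P₂(χ) + τ_M χ)/χ^{2−α} = τ_M² τ_A^{−α} sin(απ/2) Γ(α+1). -/
theorem P2_leading_nonsmooth (τA τM A2 α : ℝ) (hτA : 0 < τA) (hτM : 0 < τM) (hA2 : 0 < A2)
    (hα0 : 0 < α) (hα1 : α < 1) :
    Tendsto (fun χ : ℝ => (P2 τA τM A2 α χ + τM * χ) / χ ^ (2 - α)) (𝓝[>] 0)
      (𝓝 (τM ^ 2 * τA ^ (-α) * Real.sin (α * Real.pi / 2) * Real.Gamma (α + 1))) :=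
  P2_leading_nonsmooth_general τA τM A2 α hτM hα0 hα1
end

section
/- The NFME dissipation function f is not twice differentiable at x = 0: its derivative f′ (which exists and is continuous on ℝ) is not differentiable at 0, i.e. f′ displays a cusp at the kink. -/
open Real Set Filter Topology

/-! Write `P₂(χ) = χ · Φ(χ, χ^{1-α})`, where `Φ(u, v)` is the rational function obtained from
`𝓘 / ((𝓡 + A₂χ)² + 𝓘²)` by replacing `χ^{1-α}` with a new variable `v`; `Φ` is smooth wherever
its denominator is nonzero, in particular near the half-curve `v = u^{1-α}`, `u ≥ 0`. Then
`f(x) = x · g(|x|)` with `g(χ) = Φ(χ, χ^β)`, `β = 1 - α`, and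
`g'(χ) = ∂ᵤΦ + β χ^{β-1} ∂ᵥΦ` along the curve. Since `χ · χ^{β-1} = χ^β → 0`, `χ g'(χ) → 0`,
which makes the odd extension `x · g(|x|)` of class `C¹` with `f'(x) = g(|x|) + |x| g'(|x|)`.
But `∂ᵥΦ(0, 0) = τ_M² τ_A^{-α} sin(απ/2) Γ(α+1) > 0` and `χ^{β-1} → ∞`, so `g'(χ) → +∞`;
`g` is then increasing near `0`, and `(f'(x) - f'(0)) / x ≥ g'(x)` blows up as `x → 0⁺`. -/

section OddExtension

variable {g g' : ℝ → ℝ}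

theorem tendsto_abs_nhdsGE_zero : Tendsto (fun x : ℝ => |x|) (𝓝 0) (𝓝[≥] 0) :=
  tendsto_nhdsWithin_iff.2
    ⟨by simpa using continuous_abs.tendsto (0 : ℝ), .of_forall fun x => abs_nonneg x⟩

theorem hasDerivAt_mul_comp_abs (hg0 : ContinuousWithinAt g (Ici 0) 0)
    (hg : ∀ χ > 0, HasDerivAt g (g' χ) χ) (x : ℝ) :
    HasDerivAt (fun x => x * g |x|) (g |x| + |x| * g' |x|) x := by
  rcases eq_or_ne x 0 with rfl | hx
  · rw [hasDerivAt_iff_tendsto_slope]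
    have hlim : Tendsto (fun y => g |y|) (𝓝[≠] 0) (𝓝 (g 0)) :=
      (hg0.tendsto.comp tendsto_abs_nhdsGE_zero).mono_left nhdsWithin_le_nhds
    rw [abs_zero, zero_mul, add_zero]
    refine hlim.congr' ?_
    filter_upwards [self_mem_nhdsWithin] with y (hy : y ≠ 0)
    simp [slope_def_field, hy]
  · have hcomp := (hg |x| (abs_pos.2 hx)).comp x (hasDerivAt_abs hx)
    refine ((hasDerivAt_id' x).mul hcomp).congr_deriv ?_
    simp only [Function.comp_apply, one_mul, ← self_mul_sign x]
    ring

theorem contDiff_one_mul_comp_abs (hg0 : ContinuousWithinAt g (Ici 0) 0)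
    (hg : ∀ χ > 0, HasDerivAt g (g' χ) χ) (hg' : ContinuousOn g' (Ioi 0))
    (hlim : Tendsto (fun χ => χ * g' χ) (𝓝[>] 0) (𝓝 0)) :
    ContDiff ℝ 1 (fun x => x * g |x|) := by
  have hderiv : deriv (fun x => x * g |x|) = (fun χ => g χ + χ * g' χ) ∘ abs :=
    funext fun x => (hasDerivAt_mul_comp_abs hg0 hg x).deriv
  refine contDiff_one_iff_deriv.2
    ⟨fun x => (hasDerivAt_mul_comp_abs hg0 hg x).differentiableAt, ?_⟩
  rw [hderiv]
  refine ContinuousOn.comp_continuous (fun χ (hχ : 0 ≤ χ) => ?_) continuous_abs abs_nonneg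
  rcases hχ.eq_or_lt with rfl | hχ
  · have h0 : ContinuousWithinAt (fun χ => χ * g' χ) (Ici 0) 0 :=
      continuousWithinAt_Ioi_iff_Ici.1 (by simpa [ContinuousWithinAt] using hlim)
    exact hg0.add h0
  · exact ((hg χ hχ).continuousAt.add
      (continuousAt_id.mul (hg'.continuousAt (Ioi_mem_nhds hχ)))).continuousWithinAt

theorem not_differentiableAt_deriv_mul_comp_abs (hg0 : ContinuousWithinAt g (Ici 0) 0)
    (hg : ∀ χ > 0, HasDerivAt g (g' χ) χ) (htop : Tendsto g' (𝓝[>] 0) atTop) :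
    ¬ DifferentiableAt ℝ (deriv fun x => x * g |x|) 0 := by
  intro hdiff
  have hderiv (x : ℝ) := (hasDerivAt_mul_comp_abs hg0 hg x).deriv
  obtain ⟨δ, hδ, hmono⟩ := mem_nhdsGT_iff_exists_Ioo_subset.1 (htop.eventually_ge_atTop 0)
  have hslope : ∀ χ ∈ Ioo 0 δ, g' χ ≤ slope (deriv fun x => x * g |x|) 0 χ := by
    rintro χ ⟨hχ, hχδ⟩
    have hcont : ContinuousOn g (Icc 0 χ) := fun y hy => by
      rcases hy.1.eq_or_lt with rfl | hy0
      · exact hg0.mono Icc_subset_Ici_self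
      · exact (hg y hy0).continuousAt.continuousWithinAt
    obtain ⟨c, hc, hc_eq⟩ := exists_hasDerivAt_eq_slope g g' hχ hcont fun y hy => hg y hy.1
    have hg'c : 0 ≤ g' c := hmono ⟨hc.1, hc.2.trans hχδ⟩
    rw [hc_eq, sub_zero] at hg'c
    have hslope_eq : slope (deriv fun x => x * g |x|) 0 χ = (g χ - g 0) / χ + g' χ := by
      rw [slope_def_field, hderiv, hderiv, abs_of_pos hχ, abs_zero, zero_mul, add_zero,
        sub_zero]
      field_simp
      ring
    linarith
  have htop' : Tendsto (slope (deriv fun x => x * g |x|) 0) (𝓝[>] 0) atTop :=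
    tendsto_atTop_mono' _ (eventually_of_mem (Ioo_mem_nhdsGT hδ) hslope) htop
  exact not_tendsto_nhds_of_tendsto_atTop htop' _
    ((hasDerivAt_iff_tendsto_slope.1 hdiff.hasDerivAt).mono_left
      (nhdsWithin_mono _ fun _ h => ne_of_gt h))

end OddExtension

noncomputable def graphRpowDeriv (Φ : ℝ × ℝ → ℝ) (β χ : ℝ) : ℝ :=
  fderiv ℝ Φ (χ, χ ^ β) (1, 0) + β * χ ^ (β - 1) * fderiv ℝ Φ (χ, χ ^ β) (0, 1)

section GraphRpow

variable {Φ : ℝ × ℝ → ℝ} {U : Set (ℝ × ℝ)} {β : ℝ}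

theorem continuous_graph_rpow (hβ : 0 < β) : Continuous fun χ : ℝ => (χ, χ ^ β) :=
  continuous_id.prodMk (Real.continuous_rpow_const hβ.le)

variable (hU : IsOpen U) (hΦ : ContDiffOn ℝ 1 Φ U)
  (hgraph : ∀ χ : ℝ, 0 ≤ χ → (χ, χ ^ β) ∈ U)
include hΦ hgraph

theorem continuousOn_comp_graph_rpow (hβ : 0 < β) :
    ContinuousOn (fun χ => Φ (χ, χ ^ β)) (Ici 0) :=
  hΦ.continuousOn.comp (continuous_graph_rpow hβ).continuousOn fun χ hχ => hgraph χ hχ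

include hU

theorem hasDerivAt_comp_graph_rpow {χ : ℝ} (hχ : 0 < χ) :
    HasDerivAt (fun χ => Φ (χ, χ ^ β)) (graphRpowDeriv Φ β χ) χ := by
  have hΦχ : HasFDerivAt Φ (fderiv ℝ Φ (χ, χ ^ β)) (χ, χ ^ β) :=
    ((hΦ.differentiableOn one_ne_zero).differentiableAt
      (hU.mem_nhds (hgraph χ hχ.le))).hasFDerivAt
  have hcurve := (hasDerivAt_id' χ).prodMk (Real.hasDerivAt_rpow_const (p := β) (Or.inl hχ.ne'))
  refine (hΦχ.comp_hasDerivAt χ hcurve).congr_deriv ?_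
  have hsplit : ((1 : ℝ), β * χ ^ (β - 1)) = (1, 0) + (β * χ ^ (β - 1)) • (0, 1) := by simp
  rw [graphRpowDeriv, hsplit, map_add, map_smul, smul_eq_mul]

theorem continuousOn_fderiv_apply_graph_rpow (hβ : 0 < β) (v : ℝ × ℝ) :
    ContinuousOn (fun χ => fderiv ℝ Φ (χ, χ ^ β) v) (Ici 0) :=
  ((hΦ.continuousOn_fderiv_of_isOpen hU le_rfl).comp (continuous_graph_rpow hβ).continuousOn
    fun χ hχ => hgraph χ hχ).clm_apply continuousOn_const

theorem tendsto_fderiv_apply_graph_rpow (hβ : 0 < β) (v : ℝ × ℝ) :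
    Tendsto (fun χ => fderiv ℝ Φ (χ, χ ^ β) v) (𝓝[>] 0)
      (𝓝 (fderiv ℝ Φ (0, 0) v)) := by
  simpa [Real.zero_rpow hβ.ne'] using ((continuousOn_fderiv_apply_graph_rpow hU hΦ hgraph hβ v)
    0 self_mem_Ici).tendsto.mono_left (nhdsWithin_mono _ Ioi_subset_Ici_self)

theorem continuousOn_graphRpowDeriv (hβ : 0 < β) :
    ContinuousOn (graphRpowDeriv Φ β) (Ioi 0) := by
  have hpartial (v : ℝ × ℝ) := (continuousOn_fderiv_apply_graph_rpow hU hΦ hgraph hβ v).mono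
    Ioi_subset_Ici_self
  refine (hpartial _).add ((continuousOn_const.mul ?_).mul (hpartial _))
  exact fun χ hχ => (Real.continuousAt_rpow_const _ _ (Or.inl (ne_of_gt hχ))).continuousWithinAt

theorem tendsto_mul_graphRpowDeriv (hβ : 0 < β) :
    Tendsto (fun χ => χ * graphRpowDeriv Φ β χ) (𝓝[>] 0) (𝓝 0) := by
  have hpartial := tendsto_fderiv_apply_graph_rpow hU hΦ hgraph hβ
  have hid : Tendsto (fun χ : ℝ => χ) (𝓝[>] 0) (𝓝 0) := nhdsWithin_le_nhds
  have hpow : Tendsto (fun χ : ℝ => χ ^ β) (𝓝[>] 0) (𝓝 0) := by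
    simpa [Real.zero_rpow hβ.ne'] using
      ((Real.continuous_rpow_const hβ.le).tendsto 0).mono_left nhdsWithin_le_nhds
  have hlim := (hid.mul (hpartial (1, 0))).add ((hpow.const_mul β).mul (hpartial (0, 1)))
  simp only [zero_mul, mul_zero, add_zero] at hlim
  refine hlim.congr' ?_
  filter_upwards [self_mem_nhdsWithin] with χ (hχ : 0 < χ)
  rw [graphRpowDeriv, Real.rpow_sub_one hχ.ne']
  field_simp

theorem tendsto_graphRpowDeriv_atTop (hβ0 : 0 < β) (hβ1 : β < 1)
    (hpos : 0 < fderiv ℝ Φ (0, 0) (0, 1)) :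
    Tendsto (graphRpowDeriv Φ β) (𝓝[>] 0) atTop := by
  have hpartial := tendsto_fderiv_apply_graph_rpow hU hΦ hgraph hβ0
  have hpow : Tendsto (fun χ : ℝ => β * χ ^ (β - 1)) (𝓝[>] 0) atTop :=
    (tendsto_rpow_neg_nhdsGT_zero (by linarith)).const_mul_atTop hβ0
  exact (hpartial (1, 0)).add_atTop (hpow.atTop_mul_pos hpos (hpartial (0, 1)))

theorem contDiff_one_and_not_differentiableAt_deriv_mul_comp_graph_rpow (hβ0 : 0 < β)
    (hβ1 : β < 1) (hpos : 0 < fderiv ℝ Φ (0, 0) (0, 1)) :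
    ContDiff ℝ 1 (fun x => x * Φ (|x|, |x| ^ β)) ∧
      ¬ DifferentiableAt ℝ (deriv fun x => x * Φ (|x|, |x| ^ β)) 0 := by
  have hg0 := continuousOn_comp_graph_rpow hΦ hgraph hβ0 0 self_mem_Ici
  have hg (χ : ℝ) (hχ : 0 < χ) := hasDerivAt_comp_graph_rpow hU hΦ hgraph hχ
  exact ⟨contDiff_one_mul_comp_abs hg0 hg (continuousOn_graphRpowDeriv hU hΦ hgraph hβ0)
      (tendsto_mul_graphRpowDeriv hU hΦ hgraph hβ0),
    not_differentiableAt_deriv_mul_comp_abs hg0 hg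
      (tendsto_graphRpowDeriv_atTop hU hΦ hgraph hβ0 hβ1 hpos)⟩

end GraphRpow

/-- `𝓡(χ) + A₂χ` with `χ` replaced by `p.1` and `χ^{1-α}` by `p.2`; likewise `nfmeIm` for `𝓘`. -/
noncomputable def nfmeRe (τA A2 α : ℝ) (p : ℝ × ℝ) : ℝ :=
  p.1 + p.2 * τA ^ (-α) * Real.cos (α * Real.pi / 2) * Real.Gamma (α + 1) + A2 * p.1

noncomputable def nfmeIm (τA τM α : ℝ) (p : ℝ × ℝ) : ℝ :=
  -1 / τM - p.2 * τA ^ (-α) * Real.sin (α * Real.pi / 2) * Real.Gamma (α + 1)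

noncomputable def nfmeProfile (τA τM A2 α : ℝ) (p : ℝ × ℝ) : ℝ :=
  nfmeIm τA τM α p / (nfmeRe τA A2 α p ^ 2 + nfmeIm τA τM α p ^ 2)

section NFME

variable {τA τM A2 α : ℝ}

theorem abs_mul_real_sign (x : ℝ) : |x| * Real.sign x = x := by
  rcases lt_trichotomy x 0 with hx | rfl | hx
  · rw [abs_of_neg hx, Real.sign_of_neg hx]; ring
  · simp
  · rw [abs_of_pos hx, Real.sign_of_pos hx, mul_one]

theorem nfmeF_eq_mul_nfmeProfile :
    nfmeF τA τM A2 α = fun x => x * nfmeProfile τA τM A2 α (|x|, |x| ^ (1 - α)) := by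
  funext x
  calc nfmeF τA τM A2 α x
        = nfmeProfile τA τM A2 α (|x|, |x| ^ (1 - α)) * (|x| * Real.sign x) := by
        simp only [nfmeF, P2, nfmeProfile, nfmeRe, nfmeIm, Rfun, Ifun]; ring
    _ = _ := by rw [abs_mul_real_sign, mul_comm]

theorem nfme_sin_coeff_pos (hτA : 0 < τA) (hα0 : 0 < α) (hα1 : α < 1) :
    0 < τA ^ (-α) * Real.sin (α * π / 2) * Real.Gamma (α + 1) := by
  have hsin : 0 < Real.sin (α * π / 2) :=
    Real.sin_pos_of_pos_of_lt_pi (by positivity) (by nlinarith [Real.pi_pos])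
  have := Real.rpow_pos_of_pos hτA (-α)
  have := Real.Gamma_pos_of_pos (by linarith : 0 < α + 1)
  positivity

theorem nfmeIm_neg (hτA : 0 < τA) (hτM : 0 < τM) (hα0 : 0 < α) (hα1 : α < 1)
    {p : ℝ × ℝ} (hp : 0 ≤ p.2) : nfmeIm τA τM α p < 0 := by
  have := mul_nonneg hp (nfme_sin_coeff_pos hτA hα0 hα1).le
  have : 0 < 1 / τM := by positivity
  rw [nfmeIm, neg_div]
  linarith

theorem contDiffOn_nfmeProfile : ContDiffOn ℝ 1 (nfmeProfile τA τM A2 α)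
    {p | nfmeRe τA A2 α p ^ 2 + nfmeIm τA τM α p ^ 2 ≠ 0} := by
  have hre : ContDiff ℝ 1 (nfmeRe τA A2 α) := by unfold nfmeRe; fun_prop
  have him : ContDiff ℝ 1 (nfmeIm τA τM α) := by unfold nfmeIm; fun_prop
  exact him.contDiffOn.div ((hre.pow 2).add (him.pow 2)).contDiffOn fun _ hp => hp

theorem isOpen_nfmeDenom_ne_zero :
    IsOpen {p | nfmeRe τA A2 α p ^ 2 + nfmeIm τA τM α p ^ 2 ≠ 0} :=
  isOpen_ne_fun (by unfold nfmeRe nfmeIm; fun_prop) continuous_const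

theorem fderiv_nfmeProfile_zero_apply (hτM : 0 < τM) :
    fderiv ℝ (nfmeProfile τA τM A2 α) (0, 0) (0, 1)
      = τA ^ (-α) * Real.sin (α * π / 2) * Real.Gamma (α + 1) * τM ^ 2 := by
  have hden : nfmeRe τA A2 α (0, 0) ^ 2 + nfmeIm τA τM α (0, 0) ^ 2 ≠ 0 := by
    simp [nfmeRe, nfmeIm, hτM.ne']
  have hF : HasFDerivAt (nfmeProfile τA τM A2 α)
      (fderiv ℝ (nfmeProfile τA τM A2 α) (0, 0)) (0, 0) :=
    ((contDiffOn_nfmeProfile.differentiableOn one_ne_zero).differentiableAt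
      (isOpen_nfmeDenom_ne_zero.mem_nhds hden)).hasFDerivAt
  have hline := hF.comp_hasDerivAt (0 : ℝ)
    ((hasDerivAt_const (0 : ℝ) (0 : ℝ)).prodMk (hasDerivAt_id (0 : ℝ)))
  have hre : HasDerivAt (fun v => nfmeRe τA A2 α (0, v))
      (τA ^ (-α) * Real.cos (α * π / 2) * Real.Gamma (α + 1)) 0 := by
    have e : (fun v => nfmeRe τA A2 α (0, v))
        = fun v => v * (τA ^ (-α) * Real.cos (α * π / 2) * Real.Gamma (α + 1)) := by
      funext v; simp only [nfmeRe]; ring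
    exact e ▸ hasDerivAt_mul_const _
  have him : HasDerivAt (fun v => nfmeIm τA τM α (0, v))
      (-(τA ^ (-α) * Real.sin (α * π / 2) * Real.Gamma (α + 1))) 0 := by
    have e : (fun v => nfmeIm τA τM α (0, v))
        = fun v => -1 / τM
          + v * -(τA ^ (-α) * Real.sin (α * π / 2) * Real.Gamma (α + 1)) := by
      funext v; simp only [nfmeIm]; ring
    exact e ▸ (hasDerivAt_mul_const _).const_add _
  have hdirect : HasDerivAt (fun v => nfmeProfile τA τM A2 α (0, v))
      (τA ^ (-α) * Real.sin (α * π / 2) * Real.Gamma (α + 1) * τM ^ 2) 0 := by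
    refine (him.div ((hre.pow 2).add (him.pow 2)) (by simpa using hden)).congr_deriv ?_
    simp only [nfmeRe, nfmeIm, zero_add, mul_zero, add_zero, Pi.add_apply, Pi.pow_apply,
      zero_mul, ne_eq, OfNat.ofNat_ne_zero, not_false_eq_true, zero_pow, sub_zero, neg_mul,
      Nat.cast_ofNat, Nat.add_one_sub_one, pow_one, mul_neg, sub_neg_eq_add]
    field_simp
    ring
  exact hline.unique hdirect

theorem nfmeDenom_ne_zero (hτA : 0 < τA) (hτM : 0 < τM) (hα0 : 0 < α) (hα1 : α < 1)
    {p : ℝ × ℝ} (hp : 0 ≤ p.2) : nfmeRe τA A2 α p ^ 2 + nfmeIm τA τM α p ^ 2 ≠ 0 := by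
  have := nfmeIm_neg hτA hτM hα0 hα1 hp
  nlinarith [sq_nonneg (nfmeRe τA A2 α p)]

end NFME

theorem nfmeF_not_twice_differentiable_general (τA τM A2 α : ℝ) (hτA : 0 < τA) (hτM : 0 < τM)
    (hα0 : 0 < α) (hα1 : α < 1) :
    ContDiff ℝ 1 (nfmeF τA τM A2 α) ∧
    ¬ DifferentiableAt ℝ (deriv (nfmeF τA τM A2 α)) 0 := by
  rw [nfmeF_eq_mul_nfmeProfile]
  refine contDiff_one_and_not_differentiableAt_deriv_mul_comp_graph_rpow
    isOpen_nfmeDenom_ne_zero contDiffOn_nfmeProfile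
    (fun χ hχ => nfmeDenom_ne_zero hτA hτM hα0 hα1 (Real.rpow_nonneg hχ _))
    (by linarith) (by linarith) ?_
  rw [fderiv_nfmeProfile_zero_apply hτM]
  exact mul_pos (nfme_sin_coeff_pos hτA hα0 hα1) (by positivity)

/-- The NFME dissipation function f is not twice differentiable at x = 0: its
derivative f′ (which exists and is continuous on ℝ) is not differentiable at 0. -/
theorem nfmeF_not_twice_differentiable (τA τM A2 α : ℝ) (hτA : 0 < τA) (hτM : 0 < τM)
    (hA2 : 0 < A2) (hα0 : 0 < α) (hα1 : α < 1) :
    ContDiff ℝ 1 (nfmeF τA τM A2 α) ∧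
    ¬ DifferentiableAt ℝ (deriv (nfmeF τA τM A2 α)) 0 :=
  nfmeF_not_twice_differentiable_general τA τM A2 α hτA hτM hα0 hα1
end

section
/- As χ → ∞, P₂ decays like χ^{−α}: lim_{χ→∞} χ^{α} P₂(χ) = −τ_A^{−α} sin(απ/2) Γ(α+1)/(1 + A₂)². In particular, lim_{χ→∞} P₂(χ) = 0. -/
/-!
Dividing numerator and denominator of χ^α P₂(χ) by χ², every term except the constant
−τ_A^{−α} sin(απ/2) Γ(α+1) in the numerator and 1 + A₂ inside the squared real part of the
denominator carries a negative power of χ, because 0 < α < 1. Multiplying by χ^{−α} → 0 then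
gives the decay of P₂ itself.
-/

open Real Set Filter Topology

section

variable {α : ℝ} (a c s A : ℝ)

theorem rpow_mul_ratio_eq_normalized {x : ℝ} (hx : 0 < x) :
    x ^ α * ((-a - s * x ^ (1 - α)) * x /
      ((x + c * x ^ (1 - α) + A * x) ^ 2 + (-a - s * x ^ (1 - α)) ^ 2)) =
    (-a * x ^ (α - 1) - s) / ((1 + A + c * x ^ (-α)) ^ 2 + (-a * x⁻¹ - s * x ^ (-α)) ^ 2) := by
  rw [rpow_sub hx, rpow_sub hx, rpow_one, rpow_neg hx.le]
  have hx0 : x ≠ 0 := hx.ne'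
  have hp : x ^ α ≠ 0 := (rpow_pos_of_pos hx α).ne'
  field_simp
  ring

theorem tendsto_normalized_ratio_atTop (hA : 1 + A ≠ 0) (hα0 : 0 < α) (hα1 : α < 1) :
    Tendsto (fun x : ℝ =>
      (-a * x ^ (α - 1) - s) / ((1 + A + c * x ^ (-α)) ^ 2 + (-a * x⁻¹ - s * x ^ (-α)) ^ 2))
      atTop (𝓝 (-s / (1 + A) ^ 2)) := by
  have hneg : Tendsto (fun x : ℝ => x ^ (-α)) atTop (𝓝 0) := tendsto_rpow_neg_atTop hα0
  have hinv : Tendsto (fun x : ℝ => x⁻¹) atTop (𝓝 0) := tendsto_inv_atTop_zero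
  have hsub_one : Tendsto (fun x : ℝ => x ^ (α - 1)) atTop (𝓝 0) := by
    simpa only [neg_sub] using tendsto_rpow_neg_atTop (sub_pos.2 hα1)
  have hnum := (hsub_one.const_mul (-a)).sub_const s
  have hden := (((hneg.const_mul c).const_add (1 + A)).pow 2).add
    (((hinv.const_mul (-a)).sub (hneg.const_mul s)).pow 2)
  simp only [mul_zero, zero_sub, add_zero, sub_zero, ne_eq, OfNat.ofNat_ne_zero,
    not_false_eq_true, zero_pow] at hnum hden
  exact hnum.div hden (pow_ne_zero 2 hA)

end

theorem tendsto_zero_of_tendsto_rpow_mul {f : ℝ → ℝ} {α L : ℝ} (hα : 0 < α)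
    (h : Tendsto (fun x => x ^ α * f x) atTop (𝓝 L)) : Tendsto f atTop (𝓝 0) := by
  have hprod := (tendsto_rpow_neg_atTop hα).mul h
  rw [zero_mul] at hprod
  refine hprod.congr' ?_
  filter_upwards [eventually_gt_atTop 0] with x hx
  rw [← mul_assoc, ← rpow_add hx, neg_add_cancel, rpow_zero, one_mul]

theorem P2_eq (τA τM A2 α χ : ℝ) : P2 τA τM A2 α χ =
    (-(1 / τM) - τA ^ (-α) * sin (α * π / 2) * Gamma (α + 1) * χ ^ (1 - α)) * χ /
      ((χ + τA ^ (-α) * cos (α * π / 2) * Gamma (α + 1) * χ ^ (1 - α) + A2 * χ) ^ 2 +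
        (-(1 / τM) - τA ^ (-α) * sin (α * π / 2) * Gamma (α + 1) * χ ^ (1 - α)) ^ 2) := by
  simp only [P2, Rfun, Ifun, neg_div]
  ring

theorem P2_decay_atTop_general (τA τM A2 α : ℝ) (hA2 : 0 < A2)
    (hα0 : 0 < α) (hα1 : α < 1) :
    Tendsto (fun χ : ℝ => χ ^ α * P2 τA τM A2 α χ) atTop
      (𝓝 (-(τA ^ (-α) * Real.sin (α * Real.pi / 2) * Real.Gamma (α + 1)) / (1 + A2) ^ 2)) ∧
    Tendsto (P2 τA τM A2 α) atTop (𝓝 0) := by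
  have hlim : Tendsto (fun χ : ℝ => χ ^ α * P2 τA τM A2 α χ) atTop
      (𝓝 (-(τA ^ (-α) * Real.sin (α * Real.pi / 2) * Real.Gamma (α + 1)) / (1 + A2) ^ 2)) := by
    refine (tendsto_normalized_ratio_atTop (1 / τM)
      (τA ^ (-α) * cos (α * π / 2) * Gamma (α + 1)) _ _ (by positivity) hα0 hα1).congr' ?_
    filter_upwards [eventually_gt_atTop 0] with χ hχ
    rw [P2_eq, rpow_mul_ratio_eq_normalized _ _ _ _ hχ]
  exact ⟨hlim, tendsto_zero_of_tendsto_rpow_mul hα0 hlim⟩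

/-- As χ → ∞, P₂ decays like χ^{−α}:
lim_{χ→∞} χ^α P₂(χ) = −τ_A^{−α} sin(απ/2) Γ(α+1)/(1 + A₂)².
In particular, lim_{χ→∞} P₂(χ) = 0. -/
theorem P2_decay_atTop (τA τM A2 α : ℝ) (hτA : 0 < τA) (hτM : 0 < τM) (hA2 : 0 < A2)
    (hα0 : 0 < α) (hα1 : α < 1) :
    Tendsto (fun χ : ℝ => χ ^ α * P2 τA τM A2 α χ) atTop
      (𝓝 (-(τA ^ (-α) * Real.sin (α * Real.pi / 2) * Real.Gamma (α + 1)) / (1 + A2) ^ 2)) ∧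
    Tendsto (P2 τA τM A2 α) atTop (𝓝 0) :=
  P2_decay_atTop_general τA τM A2 α hA2 hα0 hα1
end

section
/- The NFME dissipation function f is bounded on ℝ: there exists B > 0 such that |f(x)| ≤ B for every real x. -/
open Real Set Filter Topology

/-! Writing `c = (1 + A₂)χ`, the cosine term makes `𝓡 + A₂χ ≥ c ≥ 0`, so the denominator of
`P₂` is at least `c² + 𝓘² ≥ 2c|𝓘|` by AM–GM, whence `|P₂| ≤ 1 / (2(1 + A₂))` whatever `𝓘` is. -/

lemma abs_mul_div_sq_add_sq_le {a r i χ : ℝ} (ha : 0 < a) (hχ : 0 ≤ χ) (hr : a * χ ≤ r) :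
    |i * χ / (r ^ 2 + i ^ 2)| ≤ 1 / (2 * a) := by
  rw [abs_div, abs_of_nonneg (by positivity : 0 ≤ r ^ 2 + i ^ 2)]
  have hamgm : 2 * (a * χ) * |i| ≤ (a * χ) ^ 2 + |i| ^ 2 := two_mul_le_add_sq _ _
  have hsq : (a * χ) ^ 2 ≤ r ^ 2 := pow_le_pow_left₀ (by positivity) hr 2
  have hnum : |i * χ| * (2 * a) ≤ r ^ 2 + i ^ 2 := by
    rw [abs_mul, abs_of_nonneg hχ, ← sq_abs i]
    linarith
  rcases (add_nonneg (sq_nonneg r) (sq_nonneg i)).eq_or_lt with hD | hD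
  · rw [← hD, div_zero]
    positivity
  · rw [div_le_div_iff₀ hD (by positivity)]
    linarith

lemma le_Rfun {τA α χ : ℝ} (hτA : 0 ≤ τA) (hα₀ : -1 < α) (hα₁ : α ≤ 1) (hχ : 0 ≤ χ) :
    χ ≤ Rfun τA α χ := by
  have hcos : 0 ≤ Real.cos (α * π / 2) := by
    apply Real.cos_nonneg_of_mem_Icc
    constructor <;> nlinarith [Real.pi_pos]
  have hΓ : 0 < Real.Gamma (α + 1) := Real.Gamma_pos_of_pos (by linarith)
  have hχpow := Real.rpow_nonneg hχ (1 - α)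
  have hτpow := Real.rpow_nonneg hτA (-α)
  have hterm : 0 ≤ χ ^ (1 - α) * τA ^ (-α) * Real.cos (α * π / 2) * Real.Gamma (α + 1) := by
    positivity
  unfold Rfun
  linarith

lemma abs_P2_le {τA τM A2 α χ : ℝ} (hτA : 0 ≤ τA) (hA2 : -1 < A2) (hα₀ : -1 < α) (hα₁ : α ≤ 1)
    (hχ : 0 ≤ χ) : |P2 τA τM A2 α χ| ≤ 1 / (2 * (1 + A2)) := by
  refine abs_mul_div_sq_add_sq_le (by linarith) hχ ?_
  linarith [le_Rfun hτA hα₀ hα₁ hχ]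

lemma abs_sign_le_one (x : ℝ) : |Real.sign x| ≤ 1 := by
  rcases Real.sign_apply_eq x with h | h | h <;> simp [h]

theorem nfmeF_bounded_general (τA τM A2 α : ℝ) (hτA : 0 < τA) (hA2 : 0 < A2)
    (hα0 : 0 < α) (hα1 : α < 1) :
    ∃ B : ℝ, 0 < B ∧ ∀ x : ℝ, |nfmeF τA τM A2 α x| ≤ B := by
  refine ⟨1 / (2 * (1 + A2)), by positivity, fun x => ?_⟩
  have hP2 : |P2 τA τM A2 α (|x|)| ≤ 1 / (2 * (1 + A2)) :=
    abs_P2_le hτA.le (by linarith) (by linarith) hα1.le (abs_nonneg x)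
  calc |nfmeF τA τM A2 α x| = |P2 τA τM A2 α (|x|)| * |Real.sign x| := by rw [nfmeF, abs_mul]
    _ ≤ 1 / (2 * (1 + A2)) * 1 :=
      mul_le_mul hP2 (abs_sign_le_one x) (abs_nonneg _) (by positivity)
    _ = 1 / (2 * (1 + A2)) := mul_one _

/-- The NFME dissipation function f is bounded on ℝ. -/
theorem nfmeF_bounded (τA τM A2 α : ℝ) (hτA : 0 < τA) (hτM : 0 < τM) (hA2 : 0 < A2)
    (hα0 : 0 < α) (hα1 : α < 1) :
    ∃ B : ℝ, 0 < B ∧ ∀ x : ℝ, |nfmeF τA τM A2 α x| ≤ B :=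
  nfmeF_bounded_general τA τM A2 α hτA hA2 hα0 hα1
end

section
/- Uniqueness of solutions of the NFME spin-orbit equation: since the right-hand side is C¹ in (θ, θ′), if θ₁, θ₂ : I → ℝ are twice differentiable on an open interval I, both satisfy θ″(t) = TRI(θ(t), t) + TIDE(θ′(t)) for all t ∈ I, and there is t₀ ∈ I with θ₁(t₀) = θ₂(t₀) and θ₁′(t₀) = θ₂′(t₀), then θ₁(t) = θ₂(t) for all t ∈ I. -/
open Real Set Filter Topology

/-- The tidal angular acceleration TIDE(v) = −η Σ_{q=−1}^{7} G_q² f((q+2)n − 2v). -/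
noncomputable def TIDE (τA τM A2 α n η : ℝ) (G : ℤ → ℝ) (v : ℝ) : ℝ :=
  -η * ∑ q ∈ Finset.Icc (-1 : ℤ) 7, (G q) ^ 2 * nfmeF τA τM A2 α (((q : ℝ) + 2) * n - 2 * v)

/-- The triaxiality angular acceleration TRI(θ, t) = −ζ Σ_{q=−4}^{6} G_q sin(2θ − (q+2)nt). -/
noncomputable def TRI (n ζ : ℝ) (G : ℤ → ℝ) (θ t : ℝ) : ℝ :=
  -ζ * ∑ q ∈ Finset.Icc (-4 : ℤ) 6, G q * Real.sin (2 * θ - ((q : ℝ) + 2) * n * t)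

/-!
Adjoining time as a coordinate turns the equation into an autonomous first-order system in
`(t, θ, θ′)`, so uniqueness follows from the Picard–Lindelöf theorem once the vector field is
locally Lipschitz, e.g. `C¹`. The only ingredient that is not smooth is the dissipation function,
which has the form `f(x) = x · K(|x|^β, |x|)` with `β = 1 - α ≥ 0` and `K` smooth where the
imaginary part `𝓘` does not vanish. For `x ≠ 0` its derivative is
`K + β |x|^β ∂₁K + |x| ∂₂K`, which extends continuously to `x = 0`, so `f` is `C¹`.
-/

theorem ODE_solution_unique_of_locallyLipschitz_of_mem_Ioo {E : Type*} [NormedAddCommGroup E]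
    [NormedSpace ℝ E] {V : E → E} (hV : LocallyLipschitz V) {f g : ℝ → E} {a b t₀ : ℝ}
    (ht₀ : t₀ ∈ Ioo a b) (hf : ∀ t ∈ Ioo a b, HasDerivAt f (V (f t)) t)
    (hg : ∀ t ∈ Ioo a b, HasDerivAt g (V (g t)) t) (heq : f t₀ = g t₀) :
    EqOn f g (Ioo a b) := by
  intro t ht
  obtain ⟨c, hac, hc⟩ := exists_between (lt_min ht₀.1 ht.1)
  obtain ⟨d, hd, hdb⟩ := exists_between (max_lt ht₀.2 ht.2)
  have hsub : Icc c d ⊆ Ioo a b := Icc_subset_Ioo hac hdb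
  have himage {h : ℝ → E} (hh : ∀ t ∈ Ioo a b, HasDerivAt h (V (h t)) t) :
      IsCompact (h '' Icc c d) :=
    isCompact_Icc.image_of_continuousOn fun s hs =>
      (hh s (hsub hs)).continuousAt.continuousWithinAt
  obtain ⟨K, hK⟩ := hV.locallyLipschitzOn.exists_lipschitzOnWith_of_compact
    ((himage hf).union (himage hg))
  refine ODE_solution_unique_of_mem_Ioo (v := fun _ => V) (fun _ _ => hK)
    ⟨hc.trans_le (min_le_left _ _), (le_max_left _ _).trans_lt hd⟩
    (fun s hs => ⟨hf s (hsub (Ioo_subset_Icc_self hs)),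
      Or.inl (mem_image_of_mem f (Ioo_subset_Icc_self hs))⟩)
    (fun s hs => ⟨hg s (hsub (Ioo_subset_Icc_self hs)),
      Or.inr (mem_image_of_mem g (Ioo_subset_Icc_self hs))⟩) heq
    ⟨hc.trans_le (min_le_right _ _), (le_max_right _ _).trans_lt hd⟩

theorem hasDerivAt_mul_comp_abs_rpow_of_ne {β : ℝ} {H : ℝ × ℝ → ℝ} {x : ℝ} (hx : x ≠ 0)
    (hH : DifferentiableAt ℝ H (|x| ^ β, |x|)) :
    HasDerivAt (fun y => y * H (|y| ^ β, |y|))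
      (H (|x| ^ β, |x|) + fderiv ℝ H (|x| ^ β, |x|) (β * |x| ^ β, |x|)) x := by
  have h0 : |x| ≠ 0 := abs_ne_zero.mpr hx
  have habs : HasDerivAt (|·|) (SignType.sign x : ℝ) x := hasDerivAt_abs hx
  have hpow := habs.rpow_const (p := β) (Or.inl h0)
  have hscale : x • ((SignType.sign x * β * |x| ^ (β - 1) : ℝ), (SignType.sign x : ℝ))
      = (β * |x| ^ β, |x|) := by
    rw [Prod.smul_mk, smul_eq_mul, smul_eq_mul, self_mul_sign, Real.rpow_sub_one h0,
      show x * (SignType.sign x * β * (|x| ^ β / |x|)) = x * SignType.sign x * β * |x| ^ β / |x|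
        by ring, self_mul_sign]
    field_simp
  refine ((hasDerivAt_id' x).mul
    (hH.hasFDerivAt.comp_hasDerivAt x (hpow.prodMk habs))).congr_deriv ?_
  rw [one_mul, ← smul_eq_mul, ← map_smul, hscale]
  rfl

theorem contDiff_mul_comp_abs_rpow {β : ℝ} (hβ : 0 ≤ β) {H : ℝ × ℝ → ℝ} {U : Set (ℝ × ℝ)}
    (hU : IsOpen U) (hH : ContDiffOn ℝ 1 H U) (hmem : ∀ x : ℝ, (|x| ^ β, |x|) ∈ U) :
    ContDiff ℝ 1 (fun x => x * H (|x| ^ β, |x|)) := by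
  have hp : Continuous fun x : ℝ => (|x| ^ β, |x|) :=
    (continuous_abs.rpow_const fun _ => Or.inr hβ).prodMk continuous_abs
  have hHp : Continuous fun x : ℝ => H (|x| ^ β, |x|) := hH.continuousOn.comp_continuous hp hmem
  have hderiv_cont : Continuous fun x : ℝ =>
      H (|x| ^ β, |x|) + fderiv ℝ H (|x| ^ β, |x|) (β * |x| ^ β, |x|) :=
    hHp.add (((hH.continuousOn_fderiv_of_isOpen hU le_rfl).comp_continuous hp hmem).clm_apply
      ((continuous_const.mul (continuous_abs.rpow_const fun _ => Or.inr hβ)).prodMk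
        continuous_abs))
  have hdiff : ∀ x : ℝ, DifferentiableAt ℝ H (|x| ^ β, |x|) := fun x =>
    (hH.differentiableOn one_ne_zero _ (hmem x)).differentiableAt (hU.mem_nhds (hmem x))
  have hderiv : ∀ x : ℝ, HasDerivAt (fun x => x * H (|x| ^ β, |x|))
      (H (|x| ^ β, |x|) + fderiv ℝ H (|x| ^ β, |x|) (β * |x| ^ β, |x|)) x := by
    intro x
    rcases eq_or_ne x 0 with rfl | hx
    · exact hasDerivAt_of_hasDerivAt_of_ne
        (fun y hy => hasDerivAt_mul_comp_abs_rpow_of_ne hy (hdiff y))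
        (continuous_id.mul hHp).continuousAt hderiv_cont.continuousAt
    · exact hasDerivAt_mul_comp_abs_rpow_of_ne hx (hdiff x)
  rw [contDiff_one_iff_deriv]
  refine ⟨fun x => (hderiv x).differentiableAt, ?_⟩
  rwa [show deriv _ = _ from funext fun x => (hderiv x).deriv]

noncomputable def nfmeImag (τA τM α s : ℝ) : ℝ :=
  -1 / τM - s * τA ^ (-α) * Real.sin (α * Real.pi / 2) * Real.Gamma (α + 1)

/-- `P₂(χ) / χ`, with `χ ^ (1 - α)` and `χ` as independent variables. -/
noncomputable def nfmeKernel (τA τM A2 α : ℝ) (p : ℝ × ℝ) : ℝ :=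
  nfmeImag τA τM α p.1 /
    ((p.2 + p.1 * τA ^ (-α) * Real.cos (α * Real.pi / 2) * Real.Gamma (α + 1) + A2 * p.2) ^ 2
      + nfmeImag τA τM α p.1 ^ 2)

section

variable {τA τM A2 α : ℝ}

theorem P2_eq_mul_nfmeKernel (χ : ℝ) :
    P2 τA τM A2 α χ = χ * nfmeKernel τA τM A2 α (χ ^ (1 - α), χ) := by
  simp only [P2, nfmeKernel, Ifun, nfmeImag, Rfun]
  ring

theorem nfmeF_eq_mul_nfmeKernel (x : ℝ) :
    nfmeF τA τM A2 α x = x * nfmeKernel τA τM A2 α (|x| ^ (1 - α), |x|) := by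
  have habs : |x| * Real.sign x = x := by
    rcases lt_trichotomy x 0 with hx | rfl | hx
    · rw [abs_of_neg hx, Real.sign_of_neg hx]; ring
    · simp
    · rw [abs_of_pos hx, Real.sign_of_pos hx, mul_one]
  rw [nfmeF, P2_eq_mul_nfmeKernel, mul_right_comm, habs]

theorem nfmeImag_neg (hτA : 0 < τA) (hτM : 0 < τM) (hα0 : 0 ≤ α) (hα2 : α ≤ 2) {s : ℝ}
    (hs : 0 ≤ s) : nfmeImag τA τM α s < 0 := by
  have hsin : 0 ≤ Real.sin (α * Real.pi / 2) :=
    Real.sin_nonneg_of_nonneg_of_le_pi (by positivity) (by nlinarith [Real.pi_pos])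
  have hΓ : 0 < Real.Gamma (α + 1) := Real.Gamma_pos_of_pos (by linarith)
  have : 0 ≤ s * τA ^ (-α) * Real.sin (α * Real.pi / 2) * Real.Gamma (α + 1) := by positivity
  have : -1 / τM < 0 := div_neg_of_neg_of_pos (by norm_num) hτM
  unfold nfmeImag
  linarith

theorem contDiffOn_nfmeKernel {k : WithTop ℕ∞} :
    ContDiffOn ℝ k (nfmeKernel τA τM A2 α) {p | nfmeImag τA τM α p.1 ≠ 0} := by
  refine ContDiffOn.div (by unfold nfmeImag; fun_prop) (by unfold nfmeImag; fun_prop) ?_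
  intro p hp
  have : nfmeImag τA τM α p.1 ≠ 0 := hp
  positivity

theorem contDiff_nfmeF (hτA : 0 < τA) (hτM : 0 < τM) (hα0 : 0 ≤ α) (hα1 : α ≤ 1) :
    ContDiff ℝ 1 (nfmeF τA τM A2 α) := by
  rw [show nfmeF τA τM A2 α = _ from funext nfmeF_eq_mul_nfmeKernel]
  exact contDiff_mul_comp_abs_rpow (sub_nonneg.mpr hα1)
    (isOpen_ne_fun (by unfold nfmeImag; fun_prop) continuous_const) contDiffOn_nfmeKernel
    fun x => (nfmeImag_neg hτA hτM hα0 (by linarith) (by positivity)).ne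

theorem contDiff_TIDE {n η : ℝ} {G : ℤ → ℝ} (hτA : 0 < τA) (hτM : 0 < τM) (hα0 : 0 ≤ α)
    (hα1 : α ≤ 1) : ContDiff ℝ 1 (TIDE τA τM A2 α n η G) := by
  have := contDiff_nfmeF (A2 := A2) hτA hτM hα0 hα1
  unfold TIDE
  fun_prop

end

theorem contDiff_TRI {k : WithTop ℕ∞} {n ζ : ℝ} {G : ℤ → ℝ} :
    ContDiff ℝ k (fun p : ℝ × ℝ => TRI n ζ G p.1 p.2) := by
  unfold TRI
  fun_prop

/-- The spin-orbit equation as an autonomous first-order system in `(t, θ, θ′)`. -/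
noncomputable def spinOrbitField (τA τM A2 α n ζ η : ℝ) (G : ℤ → ℝ) (p : ℝ × ℝ × ℝ) :
    ℝ × ℝ × ℝ :=
  (1, p.2.2, TRI n ζ G p.2.1 p.1 + TIDE τA τM A2 α n η G p.2.2)

theorem contDiff_spinOrbitField {τA τM A2 α n ζ η : ℝ} {G : ℤ → ℝ} (hτA : 0 < τA) (hτM : 0 < τM)
    (hα0 : 0 ≤ α) (hα1 : α ≤ 1) : ContDiff ℝ 1 (spinOrbitField τA τM A2 α n ζ η G) := by
  have hTRI := contDiff_TRI (k := 1) (n := n) (ζ := ζ) (G := G)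
  have hTIDE := contDiff_TIDE (A2 := A2) (n := n) (η := η) (G := G) hτA hτM hα0 hα1
  unfold spinOrbitField
  fun_prop

theorem hasDerivAt_spinOrbitField_of_solution {τA τM A2 α n ζ η : ℝ} {G : ℤ → ℝ}
    {θ θ' : ℝ → ℝ} {t : ℝ} (hθ : HasDerivAt θ (θ' t) t)
    (hθ' : HasDerivAt θ' (TRI n ζ G (θ t) t + TIDE τA τM A2 α n η G (θ' t)) t) :
    HasDerivAt (fun s => (s, θ s, θ' s)) (spinOrbitField τA τM A2 α n ζ η G (t, θ t, θ' t)) t :=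
  (hasDerivAt_id' t).prodMk (hθ.prodMk hθ')

theorem spin_orbit_uniqueness_general (τA τM A2 α n ζ η : ℝ) (G : ℤ → ℝ)
    (hτA : 0 < τA) (hτM : 0 < τM) (hα0 : 0 < α) (hα1 : α < 1)
    (a b : ℝ) (θ₁ θ₁' θ₂ θ₂' : ℝ → ℝ)
    (h₁ : ∀ t ∈ Set.Ioo a b, HasDerivAt θ₁ (θ₁' t) t)
    (h₁' : ∀ t ∈ Set.Ioo a b, HasDerivAt θ₁'
      (TRI n ζ G (θ₁ t) t + TIDE τA τM A2 α n η G (θ₁' t)) t)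
    (h₂ : ∀ t ∈ Set.Ioo a b, HasDerivAt θ₂ (θ₂' t) t)
    (h₂' : ∀ t ∈ Set.Ioo a b, HasDerivAt θ₂'
      (TRI n ζ G (θ₂ t) t + TIDE τA τM A2 α n η G (θ₂' t)) t)
    (t₀ : ℝ) (ht₀ : t₀ ∈ Set.Ioo a b)
    (hval : θ₁ t₀ = θ₂ t₀) (hval' : θ₁' t₀ = θ₂' t₀) :
    ∀ t ∈ Set.Ioo a b, θ₁ t = θ₂ t := by
  intro t ht
  have := ODE_solution_unique_of_locallyLipschitz_of_mem_Ioo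
    (contDiff_spinOrbitField hτA hτM hα0.le hα1.le).locallyLipschitz ht₀
    (fun s hs => hasDerivAt_spinOrbitField_of_solution (h₁ s hs) (h₁' s hs))
    (fun s hs => hasDerivAt_spinOrbitField_of_solution (h₂ s hs) (h₂' s hs))
    (by rw [hval, hval']) ht
  exact congrArg (·.2.1) this

/-- Uniqueness of solutions of the NFME spin-orbit equation on an open
interval, given equal initial data. -/
theorem spin_orbit_uniqueness (τA τM A2 α n ζ η : ℝ) (G : ℤ → ℝ)
    (hτA : 0 < τA) (hτM : 0 < τM) (hA2 : 0 < A2) (hα0 : 0 < α) (hα1 : α < 1)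
    (hn : 0 < n) (hζ : 0 ≤ ζ) (hη : 0 ≤ η)
    (a b : ℝ) (θ₁ θ₁' θ₂ θ₂' : ℝ → ℝ)
    (h₁ : ∀ t ∈ Set.Ioo a b, HasDerivAt θ₁ (θ₁' t) t)
    (h₁' : ∀ t ∈ Set.Ioo a b, HasDerivAt θ₁'
      (TRI n ζ G (θ₁ t) t + TIDE τA τM A2 α n η G (θ₁' t)) t)
    (h₂ : ∀ t ∈ Set.Ioo a b, HasDerivAt θ₂ (θ₂' t) t)
    (h₂' : ∀ t ∈ Set.Ioo a b, HasDerivAt θ₂'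
      (TRI n ζ G (θ₂ t) t + TIDE τA τM A2 α n η G (θ₂' t)) t)
    (t₀ : ℝ) (ht₀ : t₀ ∈ Set.Ioo a b)
    (hval : θ₁ t₀ = θ₂ t₀) (hval' : θ₁' t₀ = θ₂' t₀) :
    ∀ t ∈ Set.Ioo a b, θ₁ t = θ₂ t :=
  spin_orbit_uniqueness_general τA τM A2 α n ζ η G hτA hτM hα0 hα1 a b θ₁ θ₁' θ₂ θ₂' h₁ h₁' h₂ h₂'
    t₀ ht₀ hval hval'
end
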